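/- Let A be an invertible m×m tridiagonal matrix such that all trailing principal minors are nonzero. Then for i < j, (A^{-1})_{ij} = (A^{-1})_{ii} · ∏_{ξ=i+1}^{j} (−r_ξ / G_{ξ-1}), where r_ξ = A_{ξ-1,ξ} and G_{ξ-1} = E_ξ/E_{ξ+1} with E_k the trailing minor on rows/columns k..m. -/

import Mathlib

/-- Determinant of the trailing submatrix of `A` on rows and columns `k, …, m`
(`1`-based indexing; `trailingMinor A (m+1) = 1`). -/
noncomputable def trailingMinor {m : ℕ} (A : Matrix (Fin m) (Fin m) ℝ) (k : ℕ) : ℝ :=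
  if h : 1 ≤ k ∧ k ≤ m + 1 then
    (A.submatrix
        (fun i : Fin (m + 1 - k) => (⟨k - 1 + i, by have := i.isLt; omega⟩ : Fin m))
        (fun i : Fin (m + 1 - k) => (⟨k - 1 + i, by have := i.isLt; omega⟩ : Fin m))).det
  else 0

/-!
Let `x` be row `i` of `A⁻¹`, indexed from `1` and extended by `x₀ = x_{m+1} = 0`. Since
`x A = eᵢ`, every column `k > i + 1` gives `r_k x_{k-1} + q_k x_k + p_{k+1} x_{k+1} = 0`, while
Laplace expansion gives `E_k = q_k E_{k+1} - p_{k+1} r_{k+1} E_{k+2}` with `E_{m+2} = 0`.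
Combining the two, `x_k E_k = -r_k x_{k-1} E_{k+1}` propagates downward from the trivial case
`k = m + 1`, and dividing by the nonzero minors telescopes it into the product formula.
-/

open Finset Matrix

section Recurrence

variable {R : Type*} [CommRing R] {x E p q r : ℕ → R} {a n : ℕ}

theorem mul_eq_neg_mul_of_three_term (hx : x (n + 1) = 0) (hE : E (n + 2) = 0)
    (hErec : ∀ k, a < k → k ≤ n → E k = q k * E (k + 1) - p (k + 1) * r (k + 1) * E (k + 2))
    (hxrec : ∀ k, a < k → k ≤ n → r k * x (k - 1) + q k * x k + p (k + 1) * x (k + 1) = 0) :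
    ∀ k, a < k → k ≤ n + 1 → x k * E k = -r k * x (k - 1) * E (k + 1) := by
  intro k hak hkn
  induction hkn using Nat.decreasingInduction with
  | self => simp [hx, hE]
  | of_succ k hk ih =>
    have ih := ih (by omega)
    rw [Nat.add_sub_cancel] at ih
    linear_combination x k * hErec k hak (by omega) + E (k + 1) * hxrec k hak (by omega)
      - p (k + 1) * ih

end Recurrence

theorem eq_mul_prod_of_mul_eq_neg_mul {K : Type*} [Field K] {x E r : ℕ → K} {a b : ℕ}
    (hab : a ≤ b) (hE : ∀ k, a < k → k ≤ b + 1 → E k ≠ 0)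
    (h : ∀ k, a < k → k ≤ b → x k * E k = -r k * x (k - 1) * E (k + 1)) :
    x b = x a * ∏ ξ ∈ Icc (a + 1) b, (-r ξ / (E ξ / E (ξ + 1))) := by
  induction b, hab using Nat.le_induction with
  | base => simp
  | succ b hab ih =>
    rw [prod_Icc_succ_top (by omega), ← mul_assoc,
      ← ih (fun k h1 h2 => hE k h1 (by omega)) (fun k h1 h2 => h k h1 (by omega))]
    have hstep := h (b + 1) (by omega) le_rfl
    rw [Nat.add_sub_cancel] at hstep
    have h1 := hE (b + 1) (by omega) (by omega)
    have h2 := hE (b + 1 + 1) (by omega) le_rfl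
    field_simp
    linear_combination hstep

section Tridiagonal

variable {R : Type*} [CommRing R]

theorem Matrix.det_succ_succ_of_tridiagonal_corner {n : ℕ}
    (M : Matrix (Fin (n + 2)) (Fin (n + 2)) R)
    (hrow : ∀ j : Fin n, M 0 j.succ.succ = 0) (hcol : ∀ i : Fin n, M i.succ.succ 0 = 0) :
    M.det = M 0 0 * (M.submatrix Fin.succ Fin.succ).det
      - M 0 1 * M 1 0 * ((M.submatrix Fin.succ Fin.succ).submatrix Fin.succ Fin.succ).det := by
  have hminor : (M.submatrix Fin.succ (Fin.succAbove 1)).det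
      = M 1 0 * ((M.submatrix Fin.succ Fin.succ).submatrix Fin.succ Fin.succ).det := by
    rw [det_succ_column_zero, Fin.sum_univ_succ]
    simp [hcol, Fin.one_succAbove_succ, submatrix_submatrix, Function.comp_def]
  rw [det_succ_row_zero, Fin.sum_univ_succ, Fin.sum_univ_succ, Fin.succ_zero_eq_one, hminor]
  simp [hrow, sub_eq_add_neg, mul_assoc]

def tridiag (p q r : ℕ → R) (u v : ℕ) : R :=
  if u = v then q u else if u = v + 1 then p u else if v = u + 1 then r v else 0

def tridiagBlock (p q r : ℕ → R) (k n : ℕ) : Matrix (Fin n) (Fin n) R :=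
  Matrix.of fun i j => tridiag p q r (k + i) (k + j)

variable {p q r : ℕ → R}

theorem tridiag_eq_zero {u v : ℕ} (h : u + 2 ≤ v ∨ v + 2 ≤ u) : tridiag p q r u v = 0 := by
  unfold tridiag
  split_ifs <;> first | rfl | omega

theorem tridiagBlock_submatrix_succ (k n : ℕ) :
    (tridiagBlock p q r k (n + 1)).submatrix Fin.succ Fin.succ =
      tridiagBlock p q r (k + 1) n := by
  ext i j
  simp only [tridiagBlock, submatrix_apply, of_apply, Fin.val_succ, ← add_assoc, add_right_comm k]

theorem det_tridiagBlock_succ_succ (k n : ℕ) :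
    (tridiagBlock p q r k (n + 2)).det = q k * (tridiagBlock p q r (k + 1) (n + 1)).det
      - p (k + 1) * r (k + 1) * (tridiagBlock p q r (k + 2) n).det := by
  have h00 : tridiagBlock p q r k (n + 2) 0 0 = q k := by simp [tridiagBlock, tridiag]
  have h01 : tridiagBlock p q r k (n + 2) 0 1 = r (k + 1) := by
    simp [tridiagBlock, tridiag, add_assoc]
  have h10 : tridiagBlock p q r k (n + 2) 1 0 = p (k + 1) := by simp [tridiagBlock, tridiag]
  rw [det_succ_succ_of_tridiagonal_corner, tridiagBlock_submatrix_succ,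
    tridiagBlock_submatrix_succ, h00, h01, h10]
  · ring
  all_goals exact fun i => tridiag_eq_zero (by simp only [Fin.val_zero, Fin.val_succ]; omega)

theorem vecMul_eq_of_tridiag {m : ℕ} {A : Matrix (Fin m) (Fin m) R}
    (hA : ∀ i j : Fin m, A i j = tridiag p q r (i + 1) (j + 1)) {y : Fin m → R} {x : ℕ → R}
    (hx : ∀ l : Fin m, x (l + 1) = y l) (hx₀ : x 0 = 0) (hxm : x (m + 1) = 0) (c : Fin m) :
    (y ᵥ* A) c = r (c + 1) * x c + q (c + 1) * x (c + 1) + p (c + 2) * x (c + 2) := by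
  have hterm : ∀ u, x u * tridiag p q r u (c + 1) = (if u = c then r (c + 1) * x c else 0)
      + (if u = c + 1 then q (c + 1) * x (c + 1) else 0)
      + (if u = c + 2 then p (c + 2) * x (c + 2) else 0) := by
    intro u
    unfold tridiag
    split_ifs <;> first | omega | (subst_vars; ring)
  calc (y ᵥ* A) c = ∑ u ∈ range m, x (u + 1) * tridiag p q r (u + 1) (c + 1) := by
        simp only [vecMul, dotProduct, hA, ← hx]
        exact Fin.sum_univ_eq_sum_range (fun u => x (u + 1) * tridiag p q r (u + 1) (c + 1)) m
    _ = ∑ u ∈ range (m + 2), x u * tridiag p q r u (c + 1) := by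
        rw [sum_range_succ, sum_range_succ', hx₀, hxm]
        ring
    _ = _ := by
        simp only [hterm, sum_add_distrib, sum_ite_eq', mem_range]
        rw [if_pos (by omega), if_pos (by omega), if_pos (by omega)]

end Tridiagonal

section TrailingMinor

variable {m : ℕ} {p q r : ℕ → ℝ} {A : Matrix (Fin m) (Fin m) ℝ}

theorem trailingMinor_eq_det_tridiagBlock
    (hA : ∀ i j : Fin m, A i j = tridiag p q r (i + 1) (j + 1)) {k : ℕ} (hk : 1 ≤ k)
    (hkm : k ≤ m + 1) : trailingMinor A k = (tridiagBlock p q r k (m + 1 - k)).det := by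
  rw [trailingMinor, dif_pos ⟨hk, hkm⟩]
  congr 1
  ext a b
  simp only [submatrix_apply, hA, tridiagBlock, of_apply]
  congr 1 <;> omega

theorem trailingMinor_one : trailingMinor A 1 = A.det := by
  rw [trailingMinor, dif_pos ⟨le_rfl, by omega⟩]
  convert det_submatrix_equiv_self (finCongr (Nat.add_sub_cancel m 1)) A using 3 <;>
    ext <;> simp

theorem trailingMinor_of_lt {k : ℕ} (hk : m + 1 < k) : trailingMinor A k = 0 :=
  dif_neg (by omega)

theorem trailingMinor_eq_sub (hA : ∀ i j : Fin m, A i j = tridiag p q r (i + 1) (j + 1))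
    {k : ℕ} (hk : 1 ≤ k) (hkm : k ≤ m) :
    trailingMinor A k = q k * trailingMinor A (k + 1)
      - p (k + 1) * r (k + 1) * trailingMinor A (k + 2) := by
  obtain hkm | rfl := hkm.lt_or_eq
  · obtain ⟨n, rfl⟩ : ∃ n, m = k + 1 + n := ⟨m - k - 1, by omega⟩
    rw [trailingMinor_eq_det_tridiagBlock hA hk (by omega),
      trailingMinor_eq_det_tridiagBlock hA (by omega) (by omega),
      trailingMinor_eq_det_tridiagBlock hA (by omega) (by omega),
      show k + 1 + n + 1 - k = n + 2 by omega, show k + 1 + n + 1 - (k + 1) = n + 1 by omega,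
      show k + 1 + n + 1 - (k + 2) = n by omega]
    exact det_tridiagBlock_succ_succ k n
  · rw [trailingMinor_eq_det_tridiagBlock hA hk (by omega),
      trailingMinor_eq_det_tridiagBlock hA (by omega) le_rfl, trailingMinor_of_lt (by omega),
      show k + 1 - k = 1 by omega, Nat.sub_self]
    simp [tridiagBlock, tridiag]

end TrailingMinor

theorem stmt_6 (m : ℕ)
    (p q r : ℕ → ℝ) (A : Matrix (Fin m) (Fin m) ℝ)
    (hA : ∀ i j : Fin m, A i j =
      if (i : ℕ) = j then q ((i : ℕ) + 1)
      else if (i : ℕ) = (j : ℕ) + 1 then p ((i : ℕ) + 1)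
      else if (j : ℕ) = (i : ℕ) + 1 then r ((j : ℕ) + 1)
      else 0)
    (hE : ∀ k : ℕ, 1 ≤ k → k ≤ m + 1 → trailingMinor A k ≠ 0) :
    ∀ i j : Fin m, i < j →
      A⁻¹ i j = A⁻¹ i i *
        ∏ ξ ∈ Finset.Icc ((i : ℕ) + 2) ((j : ℕ) + 1),
          (-(r ξ) / (trailingMinor A ξ / trailingMinor A (ξ + 1))) := by
  intro i j hij
  have hij : (i : ℕ) < j := hij
  have hT : ∀ i j : Fin m, A i j = tridiag p q r (i + 1) (j + 1) := by simp [hA, tridiag]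
  have hinv : A⁻¹ * A = 1 :=
    nonsing_inv_mul A (trailingMinor_one (A := A) ▸ hE 1 le_rfl (by omega)).isUnit
  set x := Function.extend (fun l : Fin m => (l : ℕ) + 1) (A⁻¹ i) 0
  have hx : ∀ l : Fin m, x (l + 1) = A⁻¹ i l :=
    ((add_left_injective 1).comp Fin.val_injective).extend_apply _ _
  have hx₀ : x 0 = 0 := Function.extend_apply' _ _ _ (by omega)
  have hxm : x (m + 1) = 0 := Function.extend_apply' _ _ _ (fun ⟨l, hl⟩ => by omega)
  have hcol : ∀ k, (i : ℕ) + 1 < k → k ≤ m →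
      r k * x (k - 1) + q k * x k + p (k + 1) * x (k + 1) = 0 := by
    intro k hk hkm
    obtain ⟨c, rfl⟩ : ∃ c, k = c + 1 := ⟨k - 1, by omega⟩
    have hc := vecMul_eq_of_tridiag hT hx hx₀ hxm ⟨c, by omega⟩
    rw [← mul_apply_eq_vecMul, hinv, one_apply_ne (by grind)] at hc
    simpa using hc.symm
  have hratio := mul_eq_neg_mul_of_three_term hxm (trailingMinor_of_lt (by omega))
    (fun k hk hkm => trailingMinor_eq_sub hT (by omega) hkm) hcol
  have hprod := eq_mul_prod_of_mul_eq_neg_mul (a := (i : ℕ) + 1) (b := (j : ℕ) + 1) (by omega)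
    (fun k hk hkm => hE k (by omega) (by omega)) (fun k hk hkm => hratio k hk (by omega))
  rwa [hx, hx] at hprod
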